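/- Iterating Z starting from any digit string whose run lengths are all less than 100 eventually produces a string all of whose run lengths are at most 9. -/

import Mathlib

/-- Run-length encoding of a digit string. -/
def rle : List ℕ → List (ℕ × ℕ)
  | [] => []
  | a :: t =>
    match rle t with
    | [] => [(a, 1)]
    | (b, n) :: r => if a = b then (b, n + 1) :: r else (a, 1) :: (b, n) :: r

/-- The "look-and-say-the-biggest" map: each maximal run of the digit `a` of length `n`
is replaced by the decimal digits of `max n a` followed by the digit `a`.
(When `n ≤ 9` this is just the two digits `max n a`, `a`.) -/
def Z (s : List ℕ) : List ℕ :=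
  ((rle s).map fun p => (Nat.digits 10 (max p.2 p.1)).reverse ++ [p.1]).flatten

/-- `r` is a run-length representation of the digit string `s`: all run lengths are
positive, consecutive base digits differ, and the expansion of `r` equals `s`. -/
def IsRLE (r : List (ℕ × ℕ)) (s : List ℕ) : Prop :=
  (∀ p ∈ r, 1 ≤ p.2) ∧ (r.map Prod.fst).Chain' (· ≠ ·) ∧
    (r.map fun p => List.replicate p.2 p.1).flatten = s

lemma rle_isRLE (s : List ℕ) : IsRLE (rle s) s := by
  induction s with
  | nil => exact ⟨by simp [rle], by simp [rle, List.Chain'], by simp [rle]⟩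
  | cons a t ih =>
    obtain ⟨h1, h2, h3⟩ := ih
    show IsRLE (rle (a :: t)) (a :: t)
    rw [rle]
    cases hr : rle t with
    | nil =>
      have ht : t = [] := by rw [hr] at h3; simpa using h3.symm
      subst ht
      exact ⟨by simp, by simp [List.Chain'], by simp⟩
    | cons p r =>
      obtain ⟨b, n⟩ := p
      rw [hr] at h1 h2 h3
      show IsRLE (if a = b then (b, n + 1) :: r else (a, 1) :: (b, n) :: r) (a :: t)
      by_cases hab : a = b
      · subst hab
        rw [if_pos rfl]
        refine ⟨?_, ?_, ?_⟩
        · intro q hq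
          rcases List.mem_cons.1 hq with h | h
          · simp [h]
          · exact h1 q (List.mem_cons_of_mem _ h)
        · simpa using h2
        · simp only [List.map_cons, List.flatten_cons] at h3 ⊢
          rw [List.replicate_succ, List.cons_append, h3]
      · rw [if_neg hab]
        refine ⟨?_, ?_, ?_⟩
        · intro q hq
          rcases List.mem_cons.1 hq with h | h
          · simp [h]
          · exact h1 q h
        · simp only [List.map_cons] at h2 ⊢
          exact List.isChain_cons_cons.2 ⟨hab, h2⟩
        · simp only [List.map_cons, List.flatten_cons] at h3 ⊢
          rw [h3]
          simp

lemma replicate_infix_of_mem_rle {s : List ℕ} {p : ℕ × ℕ} (hp : p ∈ rle s) :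
    List.replicate p.2 p.1 <:+: s := by
  obtain ⟨_, _, h3⟩ := rle_isRLE s
  rw [← h3]
  exact List.infix_of_mem_flatten (List.mem_map_of_mem hp)

lemma fst_mem_of_mem_rle {s : List ℕ} {p : ℕ × ℕ} (hp : p ∈ rle s) : p.1 ∈ s := by
  obtain ⟨h1, _, _⟩ := rle_isRLE s
  have hpos := h1 p hp
  have : p.1 ∈ List.replicate p.2 p.1 := List.mem_replicate.2 ⟨by omega, rfl⟩
  exact (replicate_infix_of_mem_rle hp).subset this

/-- If a constant list is a prefix of `C ++ w` and `C` does not end with `d`,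
then it is shorter than `C`. -/
lemma replicate_prefix_bound {C w : List ℕ} {d m : ℕ} (hC : C ≠ [])
    (hCd : C.getLast? ≠ some d) (h : List.replicate m d <+: C ++ w) :
    m < C.length := by
  by_contra hlt
  push_neg at hlt
  have hCp : C <+: List.replicate m d :=
    List.prefix_of_prefix_length_le (List.prefix_append C w) h (by simpa using hlt)
  have hCrep : C = List.replicate C.length d :=
    List.eq_replicate_of_mem (fun b hb => List.eq_of_mem_replicate (hCp.subset hb))
  obtain ⟨k, hk⟩ := Nat.exists_eq_succ_of_ne_zero
    (show C.length ≠ 0 by simpa using hC)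
  apply hCd
  rw [hCrep, hk, List.replicate_succ', List.getLast?_concat]

/-- A constant infix of a concatenation of nonempty blocks of length at most 3,
whose consecutive last elements differ, has length at most 6. -/
lemma constRun_le (L : List (List ℕ)) (hne : ∀ B ∈ L, B ≠ [])
    (hlen : ∀ B ∈ L, B.length ≤ 3)
    (hch : L.Chain' (fun A B => A.getLast? ≠ B.getLast?))
    {d n : ℕ} (h : List.replicate n d <:+: L.flatten) : n ≤ 6 := by
  induction L with
  | nil =>
    simp only [List.flatten_nil] at h
    have := h.length_le
    simp at this
    omega
  | cons B L ih =>
    obtain ⟨x, y, hxy⟩ := h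
    rw [List.flatten_cons] at hxy
    by_cases h1 : B.length ≤ x.length
    · -- the infix lies entirely inside `L.flatten`
      have hx : B <+: x := by
        refine List.prefix_of_prefix_length_le (List.prefix_append B L.flatten) ?_ h1
        exact ⟨List.replicate n d ++ y, by rw [← hxy]; simp [List.append_assoc]⟩
      obtain ⟨x', rfl⟩ := hx
      refine ih (fun C hC => hne C (List.mem_cons_of_mem _ hC))
        (fun C hC => hlen C (List.mem_cons_of_mem _ hC)) hch.tail ⟨x', y, ?_⟩
      have : B ++ (x' ++ List.replicate n d ++ y) = B ++ L.flatten := by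
        rw [← hxy]; simp [List.append_assoc]
      exact List.append_cancel_left this
    · push_neg at h1
      by_cases h2 : x.length + n ≤ B.length
      · have hB3 : B.length ≤ 3 := hlen B (List.mem_cons_self)
        omega
      · push_neg at h2
        set n1 := B.length - x.length with hn1def
        have hn1pos : 1 ≤ n1 := by omega
        have hn1le : n1 ≤ n := by omega
        have hsplit : List.replicate n d =
            List.replicate n1 d ++ List.replicate (n - n1) d := by
          rw [← List.replicate_add]; congr 1; omega
        have hp1 : x ++ List.replicate n1 d <+: B ++ L.flatten := by
          have hstep : x ++ List.replicate n1 d <+: x ++ List.replicate n d := by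
            rw [List.prefix_append_right_inj]
            exact ⟨List.replicate (n - n1) d, hsplit.symm⟩
          exact hstep.trans ⟨y, hxy⟩
        have htake : x ++ List.replicate n1 d = B := by
          refine List.IsPrefix.eq_of_length ?_ (by simp; omega)
          exact List.prefix_of_prefix_length_le hp1 (List.prefix_append B _) (by simp; omega)
        have hdrop : List.replicate (n - n1) d ++ y = L.flatten := by
          have h' : (x ++ List.replicate n1 d) ++ (List.replicate (n - n1) d ++ y) =
              B ++ L.flatten := by
            rw [← hxy, hsplit]; simp only [List.append_assoc]
          rw [htake] at h'
          exact List.append_cancel_left h'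
        have hBlast : B.getLast? = some d := by
          rw [← htake]
          obtain ⟨k, hk⟩ : ∃ k, n1 = k + 1 := ⟨n1 - 1, by omega⟩
          rw [hk, List.replicate_succ', ← List.append_assoc, List.getLast?_concat]
        cases L with
        | nil =>
          simp only [List.flatten_nil] at hdrop
          have : n - n1 = 0 := by
            have := congrArg List.length hdrop
            simp at this
            omega
          have hB3 : B.length ≤ 3 := hlen B (List.mem_cons_self)
          omega
        | cons C L' =>
          have hCd : C.getLast? ≠ some d := by
            have := (List.isChain_cons_cons.1 hch).1
            rw [hBlast] at this
            exact fun hc => this hc.symm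
          have hpre : List.replicate (n - n1) d <+: C ++ L'.flatten := by
            rw [← List.flatten_cons]
            exact ⟨y, by simpa using hdrop⟩
          have hC3 : C.length ≤ 3 := hlen C (List.mem_cons_of_mem _ (List.mem_cons_self))
          have hCne : C ≠ [] := hne C (List.mem_cons_of_mem _ (List.mem_cons_self))
          have := replicate_prefix_bound hCne hCd hpre
          have hB3 : B.length ≤ 3 := hlen B (List.mem_cons_self)
          omega

/-- Iterating `Z` on a string whose run lengths are all below 100 eventually produces
a string all of whose run lengths are at most 9. -/
theorem runs_eventually_small (s : List ℕ) (hdig : ∀ d ∈ s, d ≤ 9)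
    (hrun : ∀ p ∈ rle s, p.2 < 100) :
    ∃ m, ∀ p ∈ rle (Z^[m] s), p.2 ≤ 9 := by
  refine ⟨1, fun p hp => ?_⟩
  rw [Function.iterate_one] at hp
  have hinf : List.replicate p.2 p.1 <:+: Z s := replicate_infix_of_mem_rle hp
  rw [Z] at hinf
  have hle : p.2 ≤ 6 := by
    refine constRun_le ((rle s).map fun q => (Nat.digits 10 (max q.2 q.1)).reverse ++ [q.1])
      ?_ ?_ ?_ hinf
    · intro B hB
      obtain ⟨q, hq, rfl⟩ := List.mem_map.1 hB
      simp
    · intro B hB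
      obtain ⟨q, hq, rfl⟩ := List.mem_map.1 hB
      have hq2 : q.2 < 100 := hrun q hq
      have hq1 : q.1 ≤ 9 := hdig q.1 (fst_mem_of_mem_rle hq)
      have hdl : (Nat.digits 10 (max q.2 q.1)).length ≤ 2 := by
        rcases Nat.eq_zero_or_pos (max q.2 q.1) with h0 | h0
        · simp [h0]
        · rw [Nat.digits_len 10 _ (by norm_num) (by omega)]
          have := Nat.log_lt_of_lt_pow (b := 10) (x := 2)
            (show max q.2 q.1 ≠ 0 by omega)
            (by rw [show (10:ℕ) ^ 2 = 100 from by norm_num]; omega)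
          omega
      simp only [List.length_append, List.length_reverse, List.length_singleton]
      omega
    · rw [List.Chain', List.isChain_map]
      obtain ⟨_, h2, _⟩ := rle_isRLE s
      rw [List.Chain', List.isChain_map] at h2
      refine h2.imp ?_
      intro a b hab hc
      rw [List.getLast?_concat, List.getLast?_concat] at hc
      exact hab (by simpa using hc)
  omega
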